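/- Let π₁ and π₂ be Poisson tensors on ℝ^N satisfying, for all x, y ∈ ℝ^N and all indices i, j, k: (i) ∑_{s=1}^N ( π_{2,sk}(x) (∂π_{1,ij}/∂x_s)(x) + π_{1,si}(x) (∂π_{2,jk}/∂x_s)(x) + π_{1,sj}(x) (∂π_{2,ki}/∂x_s)(x) ) = 0; and (ii) ∑_{s,m=1}^N y_s π_{1,mk}(x) (∂²π_{2,ij}/∂x_m ∂x_s)(x) = 0. Then the 2N×2N matrix field on ℝ^{2N} with blocks Π^{xx}(x,y) = π₁(x), Π^{xy}(x,y) = π₂(x), Π^{yx}(x,y) = π₂(x), Π^{yy}(x,y) = ∑_{s=1}^N (∂π₂/∂x_s)(x) y_s is a Poisson tensor on ℝ^{2N} (denoted π₁ ⋉₂ π₂). -/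

import Mathlib

open scoped ContDiff

/-- Partial derivative `∂f/∂z_s` at `z`, for functions on `ℝ^ι`. -/
noncomputable def pd {ι : Type} [Fintype ι] [DecidableEq ι]
    (s : ι) (f : (ι → ℝ) → ℝ) (x : ι → ℝ) : ℝ :=
  fderiv ℝ f x (Pi.single s 1)

/-- A Poisson tensor on `ℝ^ι`: a smooth antisymmetric matrix field satisfying the
Jacobi condition. -/
def IsPoissonTensor {ι : Type} [Fintype ι] [DecidableEq ι]
    (π : (ι → ℝ) → Matrix ι ι ℝ) : Prop :=
  (∀ i j, ContDiff ℝ ∞ fun x => π x i j) ∧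
  (∀ x i j, π x j i = - π x i j) ∧
  (∀ x i j k, ∑ s, (pd s (fun y => π y i j) x * π x s k
      + pd s (fun y => π y k i) x * π x s j
      + pd s (fun y => π y j k) x * π x s i) = 0)

/-- `c` is a (smooth) Casimir function for `π`. -/
def IsCasimir {ι : Type} [Fintype ι] [DecidableEq ι]
    (π : (ι → ℝ) → Matrix ι ι ℝ) (c : (ι → ℝ) → ℝ) : Prop :=
  ContDiff ℝ ∞ c ∧ ∀ x j, ∑ s, pd s c x * π x s j = 0

/-- The matrix of partial derivatives `(∂π_{ij}/∂x_s)(x)`. -/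
noncomputable def pdMat {N : ℕ} (s : Fin N)
    (π : (Fin N → ℝ) → Matrix (Fin N) (Fin N) ℝ) (x : Fin N → ℝ) :
    Matrix (Fin N) (Fin N) ℝ :=
  Matrix.of fun i j => pd s (fun y => π y i j) x

/-- The `x`-part of a point `z = (x,y) ∈ ℝ^{2N}`. -/
def Xc {N : ℕ} (z : (Fin N ⊕ Fin N) → ℝ) : Fin N → ℝ := fun i => z (Sum.inl i)

/-- The `y`-part of a point `z = (x,y) ∈ ℝ^{2N}`. -/
def Yc {N : ℕ} (z : (Fin N ⊕ Fin N) → ℝ) : Fin N → ℝ := fun i => z (Sum.inr i)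


/-!
The Jacobiator of `π₁ ⋉₂ π₂` is cyclically invariant in its three indices, so only the block
types `xxx`, `xxy`, `yyx` and `yyy` need to be checked. Type `xxx` is the Jacobi identity of `π₁`
and type `xxy` is condition (i). Type `yyx` is the Jacobi identity of `π₂` plus the sum in
condition (ii). Since the `yy` block is linear in `y`, type `yyy` equals `∑ₘ yₘ ∂ₘ` of the
Jacobiator of `π₂` once second partial derivatives are commuted, and therefore vanishes.
-/

section PartialDerivatives

variable {ι : Type} [Fintype ι] [DecidableEq ι] {f g : (ι → ℝ) → ℝ} {x : ι → ℝ}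

lemma pd_neg (s : ι) : pd s (fun y => -f y) x = -pd s f x := by
  simp [pd]

lemma pd_const (c : ℝ) (s : ι) : pd s (fun _ => c) x = 0 := by
  simp [pd]

lemma pd_add (hf : DifferentiableAt ℝ f x) (hg : DifferentiableAt ℝ g x) (s : ι) :
    pd s (fun y => f y + g y) x = pd s f x + pd s g x := by
  simp [pd, fderiv_fun_add hf hg]

lemma pd_mul (hf : DifferentiableAt ℝ f x) (hg : DifferentiableAt ℝ g x) (s : ι) :
    pd s (fun y => f y * g y) x = pd s f x * g x + f x * pd s g x := by
  simp [pd, fderiv_fun_mul hf hg]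
  ring

lemma pd_sum {κ : Type*} (t : Finset κ) {F : κ → (ι → ℝ) → ℝ}
    (hF : ∀ c ∈ t, DifferentiableAt ℝ (F c) x) (s : ι) :
    pd s (fun y => ∑ c ∈ t, F c y) x = ∑ c ∈ t, pd s (F c) x := by
  simp [pd, fderiv_fun_sum hF]

lemma ContDiff.contDiff_pd {n m : WithTop ℕ∞} (hf : ContDiff ℝ n f) (hmn : m + 1 ≤ n) (s : ι) :
    ContDiff ℝ m (pd s f) :=
  (hf.fderiv_right hmn).clm_apply contDiff_const

lemma ContDiff.differentiable_pd (hf : ContDiff ℝ 2 f) (s : ι) : Differentiable ℝ (pd s f) :=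
  (hf.contDiff_pd (m := 1) le_rfl s).differentiable one_ne_zero

lemma pd_pd_comm (hf : ContDiff ℝ 2 f) (s m : ι) :
    pd s (pd m f) x = pd m (pd s f) x := by
  have hsymm : IsSymmSndFDerivAt ℝ f x := hf.contDiffAt.isSymmSndFDerivAt (by simp)
  have hdiff : DifferentiableAt ℝ (fderiv ℝ f) x :=
    (hf.fderiv_right le_rfl).differentiable one_ne_zero |>.differentiableAt
  have hsnd : ∀ u v : ι,
      pd u (pd v f) x = fderiv ℝ (fderiv ℝ f) x (Pi.single u 1) (Pi.single v 1) := by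
    intro u v
    change fderiv ℝ (fun y => fderiv ℝ f y (Pi.single v 1)) x (Pi.single u 1) = _
    rw [fderiv_clm_apply hdiff (differentiableAt_const _)]
    simp
  rw [hsnd, hsnd, hsymm]

end PartialDerivatives

section Jacobiator

variable {ι : Type} [Fintype ι] [DecidableEq ι]

noncomputable def jacobiator (π : (ι → ℝ) → Matrix ι ι ℝ) (x : ι → ℝ) (i j k : ι) : ℝ :=
  ∑ s, (pd s (fun y => π y i j) x * π x s k
    + pd s (fun y => π y k i) x * π x s j
    + pd s (fun y => π y j k) x * π x s i)

lemma IsPoissonTensor.jacobiator_eq_zero {π : (ι → ℝ) → Matrix ι ι ℝ} (hπ : IsPoissonTensor π)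
    (x : ι → ℝ) (i j k : ι) : jacobiator π x i j k = 0 :=
  hπ.2.2 x i j k

lemma jacobiator_rotate (π : (ι → ℝ) → Matrix ι ι ℝ) (x : ι → ℝ) (i j k : ι) :
    jacobiator π x i j k = jacobiator π x k i j :=
  Finset.sum_congr rfl fun _ _ => by ring

lemma pd_jacobiator {π : (ι → ℝ) → Matrix ι ι ℝ} (hπ : ∀ i j, ContDiff ℝ 2 fun x => π x i j)
    (m : ι) (x : ι → ℝ) (i j k : ι) :
    pd m (fun y => jacobiator π y i j k) x
      = ∑ s, (pd m (pd s fun y => π y i j) x * π x s k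
          + pd s (fun y => π y i j) x * pd m (fun y => π y s k) x
        + (pd m (pd s fun y => π y k i) x * π x s j
          + pd s (fun y => π y k i) x * pd m (fun y => π y s j) x)
        + (pd m (pd s fun y => π y j k) x * π x s i
          + pd s (fun y => π y j k) x * pd m (fun y => π y s i) x)) := by
  have hd : ∀ a b y, DifferentiableAt ℝ (fun y => π y a b) y := fun a b y =>
    ((hπ a b).differentiable two_ne_zero).differentiableAt
  have hdd : ∀ a b s y, DifferentiableAt ℝ (pd s fun y => π y a b) y := fun a b s y =>
    ((hπ a b).differentiable_pd s).differentiableAt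
  unfold jacobiator
  rw [pd_sum _ fun s _ => by fun_prop]
  refine Finset.sum_congr rfl fun s _ => ?_
  rw [pd_add (by fun_prop) (by fun_prop), pd_add (by fun_prop) (by fun_prop),
    pd_mul (hdd i j s x) (hd s k x), pd_mul (hdd k i s x) (hd s j x),
    pd_mul (hdd j k s x) (hd s i x)]

end Jacobiator

section Pullback

variable {N : ℕ}

def xProj (N : ℕ) : ((Fin N ⊕ Fin N) → ℝ) →L[ℝ] (Fin N → ℝ) :=
  ContinuousLinearMap.pi fun i => ContinuousLinearMap.proj (Sum.inl i)

lemma xProj_apply (z : (Fin N ⊕ Fin N) → ℝ) : xProj N z = Xc z := rfl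

@[simp] lemma Xc_single_inl (s : Fin N) :
    Xc (Pi.single (Sum.inl s) (1 : ℝ)) = Pi.single s 1 := by
  ext i; simp [Xc, Pi.single_apply]

@[simp] lemma Xc_single_inr (s : Fin N) : Xc (Pi.single (Sum.inr s) (1 : ℝ)) = 0 := by
  ext i; simp [Xc]

@[simp] lemma Yc_single_inl (s : Fin N) : Yc (Pi.single (Sum.inl s) (1 : ℝ)) = 0 := by
  ext i; simp [Yc]

@[simp] lemma Yc_single_inr (s : Fin N) :
    Yc (Pi.single (Sum.inr s) (1 : ℝ)) = Pi.single s 1 := by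
  ext i; simp [Yc, Pi.single_apply]

lemma contDiff_comp_Xc {n : WithTop ℕ∞} {f : (Fin N → ℝ) → ℝ} (hf : ContDiff ℝ n f) :
    ContDiff ℝ n fun z : (Fin N ⊕ Fin N) → ℝ => f (Xc z) :=
  hf.comp (xProj N).contDiff

lemma contDiff_Yc {n : WithTop ℕ∞} (m : Fin N) :
    ContDiff ℝ n fun z : (Fin N ⊕ Fin N) → ℝ => Yc z m :=
  contDiff_apply ℝ ℝ (Sum.inr m)

lemma pd_comp_Xc {f : (Fin N → ℝ) → ℝ} {z : (Fin N ⊕ Fin N) → ℝ}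
    (hf : DifferentiableAt ℝ f (Xc z)) (S : Fin N ⊕ Fin N) :
    pd S (fun z => f (Xc z)) z = fderiv ℝ f (Xc z) (Xc (Pi.single S 1)) := by
  have hcomp : HasFDerivAt (fun z => f (Xc z)) ((fderiv ℝ f (Xc z)).comp (xProj N)) z :=
    hf.hasFDerivAt.comp z (xProj N).hasFDerivAt
  simp [pd, hcomp.fderiv, xProj_apply]

lemma pd_inl_comp_Xc {f : (Fin N → ℝ) → ℝ} {z : (Fin N ⊕ Fin N) → ℝ}
    (hf : DifferentiableAt ℝ f (Xc z)) (s : Fin N) :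
    pd (Sum.inl s) (fun z => f (Xc z)) z = pd s f (Xc z) := by
  rw [pd_comp_Xc hf, Xc_single_inl, pd]

lemma pd_inr_comp_Xc {f : (Fin N → ℝ) → ℝ} {z : (Fin N ⊕ Fin N) → ℝ}
    (hf : DifferentiableAt ℝ f (Xc z)) (s : Fin N) :
    pd (Sum.inr s) (fun z => f (Xc z)) z = 0 := by
  rw [pd_comp_Xc hf, Xc_single_inr, map_zero]

lemma pd_Yc (S : Fin N ⊕ Fin N) (m : Fin N) (z : (Fin N ⊕ Fin N) → ℝ) :
    pd S (fun z => Yc z m) z = Yc (Pi.single S 1) m := by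
  simp [pd, Yc, (hasFDerivAt_apply (𝕜 := ℝ) (Sum.inr m) z).fderiv]

lemma pd_inl_sum_Yc_mul {g : Fin N → (Fin N → ℝ) → ℝ}
    {z : (Fin N ⊕ Fin N) → ℝ} (hg : ∀ m, DifferentiableAt ℝ (g m) (Xc z)) (s : Fin N) :
    pd (Sum.inl s) (fun z => ∑ m, Yc z m * g m (Xc z)) z = ∑ m, Yc z m * pd s (g m) (Xc z) := by
  have hYc : ∀ m, DifferentiableAt ℝ (fun z => Yc z m) z :=
    fun m => ((contDiff_Yc (n := 1) m).differentiable one_ne_zero).differentiableAt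
  have hgX : ∀ m, DifferentiableAt ℝ (fun z => g m (Xc z)) z :=
    fun m => (hg m).comp z (xProj N).differentiableAt
  rw [pd_sum _ fun m _ => (hYc m).fun_mul (hgX m)]
  refine Finset.sum_congr rfl fun m _ => ?_
  rw [pd_mul (hYc m) (hgX m), pd_Yc, pd_inl_comp_Xc (hg m), Yc_single_inl, Pi.zero_apply,
    zero_mul, zero_add]

lemma pd_inr_sum_Yc_mul {g : Fin N → (Fin N → ℝ) → ℝ}
    {z : (Fin N ⊕ Fin N) → ℝ} (hg : ∀ m, DifferentiableAt ℝ (g m) (Xc z)) (s : Fin N) :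
    pd (Sum.inr s) (fun z => ∑ m, Yc z m * g m (Xc z)) z = g s (Xc z) := by
  have hYc : ∀ m, DifferentiableAt ℝ (fun z => Yc z m) z :=
    fun m => ((contDiff_Yc (n := 1) m).differentiable one_ne_zero).differentiableAt
  have hgX : ∀ m, DifferentiableAt ℝ (fun z => g m (Xc z)) z :=
    fun m => (hg m).comp z (xProj N).differentiableAt
  rw [pd_sum _ fun m _ => (hYc m).fun_mul (hgX m)]
  simp [pd_mul (hYc _) (hgX _), pd_Yc, pd_inr_comp_Xc (hg _), Yc_single_inr, Pi.single_apply]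

end Pullback

section Semidirect

variable {N : ℕ} (π₁ π₂ : (Fin N → ℝ) → Matrix (Fin N) (Fin N) ℝ)

noncomputable def semidirectTensor :
    ((Fin N ⊕ Fin N) → ℝ) → Matrix (Fin N ⊕ Fin N) (Fin N ⊕ Fin N) ℝ := fun z =>
  Matrix.fromBlocks (π₁ (Xc z)) (π₂ (Xc z)) (π₂ (Xc z)) (∑ s, Yc z s • pdMat s π₂ (Xc z))

variable (z : (Fin N ⊕ Fin N) → ℝ) (i j : Fin N)

@[simp] lemma semidirectTensor_inl_inl :
    semidirectTensor π₁ π₂ z (Sum.inl i) (Sum.inl j) = π₁ (Xc z) i j := rfl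

@[simp] lemma semidirectTensor_inl_inr :
    semidirectTensor π₁ π₂ z (Sum.inl i) (Sum.inr j) = π₂ (Xc z) i j := rfl

@[simp] lemma semidirectTensor_inr_inl :
    semidirectTensor π₁ π₂ z (Sum.inr i) (Sum.inl j) = π₂ (Xc z) i j := rfl

@[simp] lemma semidirectTensor_inr_inr :
    semidirectTensor π₁ π₂ z (Sum.inr i) (Sum.inr j)
      = ∑ m, Yc z m * pd m (fun x => π₂ x i j) (Xc z) := by
  simp [semidirectTensor, pdMat, Matrix.sum_apply]

variable {π₁ π₂}

lemma contDiff_semidirectTensor {n m : WithTop ℕ∞} (h₁ : ∀ i j, ContDiff ℝ n fun x => π₁ x i j)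
    (h₂ : ∀ i j, ContDiff ℝ m fun x => π₂ x i j) (hnm : n + 1 ≤ m) (a b : Fin N ⊕ Fin N) :
    ContDiff ℝ n fun z => semidirectTensor π₁ π₂ z a b := by
  have h₂' : ∀ i j, ContDiff ℝ n fun x => π₂ x i j :=
    fun i j => (h₂ i j).of_le (le_self_add.trans hnm)
  rcases a with i | i <;> rcases b with j | j <;> simp only [semidirectTensor_inl_inl,
    semidirectTensor_inl_inr, semidirectTensor_inr_inl, semidirectTensor_inr_inr]
  · exact contDiff_comp_Xc (h₁ i j)
  · exact contDiff_comp_Xc (h₂' i j)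
  · exact contDiff_comp_Xc (h₂' i j)
  · exact ContDiff.sum fun k _ =>
      (contDiff_Yc k).mul (contDiff_comp_Xc ((h₂ i j).contDiff_pd hnm k))

lemma semidirectTensor_antisymm (h₁ : ∀ x i j, π₁ x j i = -π₁ x i j)
    (h₂ : ∀ x i j, π₂ x j i = -π₂ x i j) (a b : Fin N ⊕ Fin N) :
    semidirectTensor π₁ π₂ z b a = -semidirectTensor π₁ π₂ z a b := by
  rcases a with i | i <;> rcases b with j | j
  · exact h₁ _ i j
  · exact h₂ _ i j
  · exact h₂ _ i j
  · simp only [semidirectTensor_inr_inr, fun x => h₂ x i j, pd_neg, mul_neg,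
      Finset.sum_neg_distrib]

variable (k : Fin N)

lemma jacobiator_semidirectTensor_inl_inl_inl (h₁ : ∀ i j, Differentiable ℝ fun x => π₁ x i j) :
    jacobiator (semidirectTensor π₁ π₂) z (Sum.inl i) (Sum.inl j) (Sum.inl k)
      = jacobiator π₁ (Xc z) i j k := by
  simp only [jacobiator, Fintype.sum_sum_type, semidirectTensor_inl_inl, semidirectTensor_inr_inl,
    pd_inl_comp_Xc ((h₁ _ _).differentiableAt), pd_inr_comp_Xc ((h₁ _ _).differentiableAt),
    zero_mul, add_zero, Finset.sum_const_zero]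

lemma jacobiator_semidirectTensor_inl_inl_inr (h₁ : ∀ i j, Differentiable ℝ fun x => π₁ x i j)
    (h₂ : ∀ i j, Differentiable ℝ fun x => π₂ x i j) :
    jacobiator (semidirectTensor π₁ π₂) z (Sum.inl i) (Sum.inl j) (Sum.inr k)
      = ∑ s, (π₂ (Xc z) s k * pd s (fun x => π₁ x i j) (Xc z)
        + π₁ (Xc z) s i * pd s (fun x => π₂ x j k) (Xc z)
        + π₁ (Xc z) s j * pd s (fun x => π₂ x k i) (Xc z)) := by
  simp only [jacobiator, Fintype.sum_sum_type, semidirectTensor_inl_inl, semidirectTensor_inl_inr,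
    semidirectTensor_inr_inl, semidirectTensor_inr_inr,
    pd_inl_comp_Xc ((h₁ _ _).differentiableAt), pd_inr_comp_Xc ((h₁ _ _).differentiableAt),
    pd_inl_comp_Xc ((h₂ _ _).differentiableAt), pd_inr_comp_Xc ((h₂ _ _).differentiableAt),
    zero_mul, add_zero, Finset.sum_const_zero]
  exact Finset.sum_congr rfl fun s _ => by ring

lemma jacobiator_semidirectTensor_inr_inr_inl (h₂ : ∀ i j, ContDiff ℝ 2 fun x => π₂ x i j) :
    jacobiator (semidirectTensor π₁ π₂) z (Sum.inr i) (Sum.inr j) (Sum.inl k)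
      = jacobiator π₂ (Xc z) i j k
        + ∑ s, ∑ m, Yc z s * π₁ (Xc z) m k * pd m (pd s fun x => π₂ x i j) (Xc z) := by
  have hd : ∀ a b, Differentiable ℝ fun x => π₂ x a b :=
    fun a b => (h₂ a b).differentiable two_ne_zero
  have hsecond : ∑ s, (∑ m, Yc z m * pd s (pd m fun x => π₂ x i j) (Xc z)) * π₁ (Xc z) s k
      = ∑ s, ∑ m, Yc z s * π₁ (Xc z) m k * pd m (pd s fun x => π₂ x i j) (Xc z) := by
    simp only [Finset.sum_mul]
    rw [Finset.sum_comm]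
    exact Finset.sum_congr rfl fun _ _ => Finset.sum_congr rfl fun _ _ => by ring
  simp only [jacobiator, Fintype.sum_sum_type, semidirectTensor_inl_inl, semidirectTensor_inl_inr,
    semidirectTensor_inr_inl, semidirectTensor_inr_inr,
    pd_inl_comp_Xc ((hd _ _).differentiableAt), pd_inr_comp_Xc ((hd _ _).differentiableAt),
    pd_inl_sum_Yc_mul fun m => ((h₂ _ _).differentiable_pd m).differentiableAt,
    pd_inr_sum_Yc_mul fun m => ((h₂ _ _).differentiable_pd m).differentiableAt, zero_mul, add_zero]
  rw [← hsecond]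
  simp only [Finset.sum_add_distrib]
  ring

lemma jacobiator_semidirectTensor_inr_inr_inr (h₂ : ∀ i j, ContDiff ℝ 2 fun x => π₂ x i j) :
    jacobiator (semidirectTensor π₁ π₂) z (Sum.inr i) (Sum.inr j) (Sum.inr k)
      = ∑ m, Yc z m * pd m (fun x => jacobiator π₂ x i j k) (Xc z) := by
  simp only [pd_jacobiator h₂]
  simp only [jacobiator, Fintype.sum_sum_type, semidirectTensor_inl_inr, semidirectTensor_inr_inr,
    pd_inl_sum_Yc_mul fun m => ((h₂ _ _).differentiable_pd m).differentiableAt,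
    pd_inr_sum_Yc_mul fun m => ((h₂ _ _).differentiable_pd m).differentiableAt]
  simp only [Finset.mul_sum, Finset.sum_mul, ← Finset.sum_add_distrib]
  rw [Finset.sum_comm]
  refine Finset.sum_congr rfl fun m _ => Finset.sum_congr rfl fun s _ => ?_
  rw [pd_pd_comm (h₂ i j) s m, pd_pd_comm (h₂ k i) s m, pd_pd_comm (h₂ j k) s m]
  ring

end Semidirect

theorem stmt16_general {N : ℕ}
    (π₁ π₂ : (Fin N → ℝ) → Matrix (Fin N) (Fin N) ℝ)
    (hπ₁ : IsPoissonTensor π₁) (hπ₂ : IsPoissonTensor π₂)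
    (hi : ∀ (x : Fin N → ℝ) (i j k : Fin N),
      ∑ s, (π₂ x s k * pd s (fun x' => π₁ x' i j) x
        + π₁ x s i * pd s (fun x' => π₂ x' j k) x
        + π₁ x s j * pd s (fun x' => π₂ x' k i) x) = 0)
    (hii : ∀ (x y : Fin N → ℝ) (i j k : Fin N),
      ∑ s, ∑ m, y s * π₁ x m k
        * pd m (fun x' => pd s (fun x'' => π₂ x'' i j) x') x = 0) :
    IsPoissonTensor (fun z : (Fin N ⊕ Fin N) → ℝ =>
      Matrix.fromBlocks
        (π₁ (Xc z))
        (π₂ (Xc z))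
        (π₂ (Xc z))
        (∑ s, Yc z s • pdMat s π₂ (Xc z))) := by
  change IsPoissonTensor (semidirectTensor π₁ π₂)
  have hd₁ : ∀ i j, Differentiable ℝ fun x => π₁ x i j :=
    fun i j => (hπ₁.1 i j).differentiable (by simp)
  have hC₂ : ∀ i j, ContDiff ℝ 2 fun x => π₂ x i j :=
    fun i j => (hπ₂.1 i j).of_le (WithTop.coe_le_coe.2 le_top)
  have hd₂ : ∀ i j, Differentiable ℝ fun x => π₂ x i j :=
    fun i j => (hC₂ i j).differentiable two_ne_zero
  have hxxy : ∀ z i j k,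
      jacobiator (semidirectTensor π₁ π₂) z (Sum.inl i) (Sum.inl j) (Sum.inr k) = 0 :=
    fun z i j k => (jacobiator_semidirectTensor_inl_inl_inr z i j k hd₁ hd₂).trans (hi _ i j k)
  have hyyx : ∀ z i j k,
      jacobiator (semidirectTensor π₁ π₂) z (Sum.inr i) (Sum.inr j) (Sum.inl k) = 0 := by
    intro z i j k
    rw [jacobiator_semidirectTensor_inr_inr_inl z i j k hC₂, hπ₂.jacobiator_eq_zero,
      hii _ _ i j k, add_zero]
  refine ⟨contDiff_semidirectTensor hπ₁.1 hπ₂.1 (by simp),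
    fun z => semidirectTensor_antisymm z hπ₁.2.1 hπ₂.2.1,
    fun z a b c => (?_ : jacobiator _ z a b c = 0)⟩
  rcases a with i | i <;> rcases b with j | j <;> rcases c with k | k
  · rw [jacobiator_semidirectTensor_inl_inl_inl z i j k hd₁, hπ₁.jacobiator_eq_zero]
  · exact hxxy z i j k
  · rw [jacobiator_rotate]; exact hxxy z k i j
  · rw [jacobiator_rotate, jacobiator_rotate]; exact hyyx z j k i
  · rw [jacobiator_rotate, jacobiator_rotate]; exact hxxy z j k i
  · rw [jacobiator_rotate]; exact hyyx z k i j
  · exact hyyx z i j k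
  · rw [jacobiator_semidirectTensor_inr_inr_inr z i j k hC₂]
    simp only [hπ₂.jacobiator_eq_zero, pd_const, mul_zero, Finset.sum_const_zero]

/-- under conditions (i)–(ii), the tensor
`π₁ ⋉₂ π₂ = [[π₁(x), π₂(x)],[π₂(x), ∑_s (∂π₂/∂x_s)(x) y_s]]` is Poisson on `ℝ^{2N}`. -/
theorem stmt16 {N : ℕ} (hN : 1 ≤ N)
    (π₁ π₂ : (Fin N → ℝ) → Matrix (Fin N) (Fin N) ℝ)
    (hπ₁ : IsPoissonTensor π₁) (hπ₂ : IsPoissonTensor π₂)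
    (hi : ∀ (x : Fin N → ℝ) (i j k : Fin N),
      ∑ s, (π₂ x s k * pd s (fun x' => π₁ x' i j) x
        + π₁ x s i * pd s (fun x' => π₂ x' j k) x
        + π₁ x s j * pd s (fun x' => π₂ x' k i) x) = 0)
    (hii : ∀ (x y : Fin N → ℝ) (i j k : Fin N),
      ∑ s, ∑ m, y s * π₁ x m k
        * pd m (fun x' => pd s (fun x'' => π₂ x'' i j) x') x = 0) :
    IsPoissonTensor (fun z : (Fin N ⊕ Fin N) → ℝ =>
      Matrix.fromBlocks
        (π₁ (Xc z))
        (π₂ (Xc z))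
        (π₂ (Xc z))
        (∑ s, Yc z s • pdMat s π₂ (Xc z))) :=
  stmt16_general π₁ π₂ hπ₁ hπ₂ hi hii
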